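/- Let G be a connected compact metric graph with exponents p̄ and nonlinearities γ_e as above. Suppose v = (v_e) and v̂ = (v̂_e) (v_e, v̂_e ∈ L^1(0,ℓ_e)), w = (w_e) and ŵ = (ŵ_e) with w_e, ŵ_e ∈ L^1(0,ℓ_e), and ω, ω̂ : V → ℝ are such that v is a weak solution of (P_ω^{v+w}) and v̂ is a weak solution of (P_{ω̂}^{v̂+ŵ}) (that is, with right-hand sides v + w and v̂ + ŵ respectively). Then for every λ > 0: Σ_{e∈E} ∫₀^{ℓ_e} (v_e − v̂_e)⁺ ≤ Σ_{e∈E} ∫₀^{ℓ_e} (v_e − v̂_e + λ(w_e − ŵ_e))⁺ + λ Σ_{v∈V} (ω(v) − ω̂(v))⁺. (T-accretivity of the doubly nonlinear diffusion operator on G.) -/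

import Mathlib

/-!
Kato's argument. Let `u, û` be the Sobolev functions with `v = γ ∘ u`, `v̂ = γ ∘ û`, and test both
weak formulations with `H(u - û)`, where `H` is a smooth monotone approximation of the Heaviside
function; the chain rule for absolutely continuous functions makes this an admissible test
function. Since the right-hand sides are `v + w` and `v̂ + ŵ`, the `v`-terms cancel on subtracting,
and monotonicity of `ρ_p` makes the diffusion term `∫ (ρ(u') - ρ(û')) H'(u - û) (u' - û')`
nonnegative, so `∫ (ŵ - w) H(u - û) ≤ Σ (ω - ω̂)⁺`. Letting `H` tend to `1_{(0,∞)}`, the same holds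
with `χ = 1_{u > û}`. Finally `γ` is monotone, so `(v - v̂)⁺ = (v - v̂) χ`, and
`(v - v̂) χ + λ (w - ŵ) χ ≤ (v - v̂ + λ (w - ŵ))⁺` pointwise.
-/

open MeasureTheory Set Filter

noncomputable section

/-- A connected compact metric graph: finite nonempty vertex set, finite edge set,
initial/terminal vertex maps without loops, positive edge lengths, no multiple edges,
and connectedness via paths of edges. -/
structure MetricGraph where
  V : Type
  E : Type
  fintypeV : Fintype V
  fintypeE : Fintype E
  nonemptyV : Nonempty V
  ι : E → V
  τ : E → V
  no_loops : ∀ e, ι e ≠ τ e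
  len : E → ℝ
  len_pos : ∀ e, 0 < len e
  no_multi : ∀ e e', ({ι e, τ e} : Set V) = ({ι e', τ e'} : Set V) → e = e'
  connected : ∀ v w : V,
    Relation.ReflTransGen (fun a b => ∃ e, (ι e = a ∧ τ e = b) ∨ (ι e = b ∧ τ e = a)) v w

/-- Sum over the edges of the graph. -/
def edgeSum (G : MetricGraph) (F : G.E → ℝ) : ℝ :=
  letI := G.fintypeE
  ∑ e, F e

/-- Sum over the vertices of the graph. -/
def vertexSum (G : MetricGraph) (F : G.V → ℝ) : ℝ :=
  letI := G.fintypeV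
  ∑ v, F v

/-- Number of vertices. -/
def vertexCard (G : MetricGraph) : ℕ :=
  letI := G.fintypeV
  Fintype.card G.V

/-- ρ_p(r) = |r|^(p-2) r. -/
def rho (p r : ℝ) : ℝ := |r| ^ (p - 2) * r

/-- `(u, u')` is in the Sobolev space W^{1,p}(0,ℓ): `u'` is integrable with `|u'|^p`
integrable on (0,ℓ), and `u` is absolutely continuous on [0,ℓ] with derivative `u'`. -/
def IntervalSobolev (ℓ p : ℝ) (u u' : ℝ → ℝ) : Prop :=
  IntegrableOn u' (Ioo 0 ℓ) volume ∧
  IntegrableOn (fun x => |u' x| ^ p) (Ioo 0 ℓ) volume ∧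
  ∀ x ∈ Icc (0:ℝ) ℓ, u x = u 0 + ∫ t in (0:ℝ)..x, u' t

/-- `(u, u')` is in W^{1,p̄}(G), continuous at the vertices with vertex values `uV`. -/
def GraphSobolev (G : MetricGraph) (p : G.E → ℝ) (u u' : G.E → ℝ → ℝ) (uV : G.V → ℝ) : Prop :=
  (∀ e, IntervalSobolev (G.len e) (p e) (u e) (u' e)) ∧
  (∀ e, u e 0 = uV (G.ι e)) ∧
  (∀ e, u e (G.len e) = uV (G.τ e))

/-- `v` is a weak solution of the graph problem (P_ω^f) with data `u, u', uV`. -/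
def SolvesGraphProblem (G : MetricGraph) (p : G.E → ℝ) (γ : G.E → ℝ → ℝ)
    (f : G.E → ℝ → ℝ) (ω : G.V → ℝ)
    (v : G.E → ℝ → ℝ) (u u' : G.E → ℝ → ℝ) (uV : G.V → ℝ) : Prop :=
  (∀ e, IntegrableOn (v e) (Ioo 0 (G.len e)) volume) ∧
  GraphSobolev G p u u' uV ∧
  (∀ e, ∀ᵐ x ∂(volume.restrict (Ioo 0 (G.len e))), v e x = γ e (u e x)) ∧
  ∀ φ φ' : G.E → ℝ → ℝ, ∀ φV : G.V → ℝ, GraphSobolev G p φ φ' φV →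
    edgeSum G (fun e => ∫ x in Ioo 0 (G.len e), v e x * φ e x)
      + edgeSum G (fun e => ∫ x in Ioo 0 (G.len e), rho (p e) (u' e x) * φ' e x)
    = edgeSum G (fun e => ∫ x in Ioo 0 (G.len e), f e x * φ e x)
      + vertexSum G (fun w => ω w * φV w)

/-- `v` is a weak solution of the graph problem (P_ω^f). -/
def IsGraphWeakSolution (G : MetricGraph) (p : G.E → ℝ) (γ : G.E → ℝ → ℝ)
    (f : G.E → ℝ → ℝ) (ω : G.V → ℝ) (v : G.E → ℝ → ℝ) : Prop :=
  ∃ u u' uV, SolvesGraphProblem G p γ f ω v u u' uV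

/-- `v` is a weak solution of the interval Neumann problem (P^{γ,f}_{p,a,b}),
with associated Sobolev function `u` (derivative `u'`). -/
def SolvesNeumann (ℓ p : ℝ) (γ f : ℝ → ℝ) (a b : ℝ) (v u u' : ℝ → ℝ) : Prop :=
  IntegrableOn v (Ioo 0 ℓ) volume ∧
  IntervalSobolev ℓ p u u' ∧
  (∀ᵐ x ∂(volume.restrict (Ioo 0 ℓ)), v x = γ (u x)) ∧
  ∀ φ φ' : ℝ → ℝ, IntervalSobolev ℓ p φ φ' →
    (∫ x in Ioo 0 ℓ, v x * φ x) + (∫ x in Ioo 0 ℓ, rho p (u' x) * φ' x)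
    = (∫ x in Ioo 0 ℓ, f x * φ x) + a * φ 0 + b * φ ℓ

/-- `v` is a weak solution of the interval Neumann problem (P^{γ,f}_{p,a,b}). -/
def IsNeumannWeakSolution (ℓ p : ℝ) (γ f : ℝ → ℝ) (a b : ℝ) (v : ℝ → ℝ) : Prop :=
  ∃ u u', SolvesNeumann ℓ p γ f a b v u u'

end

open scoped NNReal Topology

theorem LipschitzWith.comp_absolutelyContinuousOnInterval {X Y : Type*} [PseudoMetricSpace X]
    [PseudoMetricSpace Y] {q : X → Y} {f : ℝ → X} {K : ℝ≥0} {a b : ℝ}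
    (hq : LipschitzWith K q) (hf : AbsolutelyContinuousOnInterval f a b) :
    AbsolutelyContinuousOnInterval (q ∘ f) a b := by
  have hlim := Tendsto.const_mul (K : ℝ) hf
  rw [mul_zero] at hlim
  refine squeeze_zero (fun _ => Finset.sum_nonneg fun _ _ => dist_nonneg) (fun _ => ?_) hlim
  rw [Finset.mul_sum]
  exact Finset.sum_le_sum fun _ _ => hq.dist_le_mul _ _

theorem integral_deriv_comp_primitive_mul {q h : ℝ → ℝ} {K : ℝ≥0} {a b : ℝ}
    (hq : Differentiable ℝ q) (hqK : LipschitzWith K q) (hh : IntervalIntegrable h volume a b)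
    (c : ℝ) :
    ∫ t in a..b, deriv q (c + ∫ s in a..t, h s) * h t = q (c + ∫ t in a..b, h t) - q c := by
  set F : ℝ → ℝ := fun x => c + ∫ s in a..x, h s
  have hF : AbsolutelyContinuousOnInterval (q ∘ F) a b :=
    (hqK.comp (isometry_add_left c).lipschitz).comp_absolutelyContinuousOnInterval
      (hh.absolutelyContinuousOnInterval_intervalIntegral left_mem_uIcc)
  have hFa : F a = c := by simp [F]
  calc ∫ t in a..b, deriv q (F t) * h t = ∫ t in a..b, deriv (q ∘ F) t := by
        refine intervalIntegral.integral_congr_ae ?_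
        filter_upwards [hh.ae_hasDerivAt_integral] with t ht hta
        have hFt : HasDerivAt F (h t) t :=
          (ht (uIoc_subset_uIcc hta) a left_mem_uIcc).const_add c
        exact ((hq (F t)).hasDerivAt.comp t hFt).deriv.symm
    _ = q (F b) - q (F a) := hF.integral_deriv_eq_sub
    _ = q (c + ∫ t in a..b, h t) - q c := by rw [hFa]

theorem integrable_abs_rpow_iff_memLp {α : Type*} [MeasurableSpace α] {μ : Measure α}
    {f : α → ℝ} {p : ℝ} (hp : 0 < p) (hf : AEStronglyMeasurable f μ) :
    Integrable (fun x => |f x| ^ p) μ ↔ MemLp f (ENNReal.ofReal p) μ := by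
  rw [← integrable_norm_rpow_iff hf (by simpa using hp) ENNReal.ofReal_ne_top,
    ENNReal.toReal_ofReal hp.le]
  rfl

namespace IntervalSobolev

variable {ℓ p : ℝ} {u u' : ℝ → ℝ}

theorem continuousOn (hu : IntervalSobolev ℓ p u u') : ContinuousOn u (Icc 0 ℓ) := by
  rcases le_or_gt 0 ℓ with hℓ | hℓ
  · have hint : IntegrableOn u' (uIcc 0 ℓ) := by
      rw [uIcc_of_le hℓ, integrableOn_Icc_iff_integrableOn_Ioo]
      exact hu.1
    rw [← uIcc_of_le hℓ]
    exact (continuousOn_const.add (intervalIntegral.continuousOn_primitive_interval hint)).congr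
      fun x hx => hu.2.2 x (uIcc_of_le hℓ ▸ hx)
  · simp [Icc_eq_empty_of_lt hℓ]

theorem aestronglyMeasurable (hu : IntervalSobolev ℓ p u u') :
    AEStronglyMeasurable u (volume.restrict (Ioo 0 ℓ)) :=
  (hu.continuousOn.mono Ioo_subset_Icc_self).aestronglyMeasurable measurableSet_Ioo

theorem integrableOn_mul {f : ℝ → ℝ} (hu : IntervalSobolev ℓ p u u')
    (hf : IntegrableOn f (Ioo 0 ℓ)) : IntegrableOn (fun x => f x * u x) (Ioo 0 ℓ) := by
  obtain ⟨C, hC⟩ := isCompact_Icc.exists_bound_of_continuousOn hu.continuousOn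
  refine hf.mul_bdd (c := C) hu.aestronglyMeasurable ?_
  filter_upwards [ae_restrict_mem measurableSet_Ioo] with x hx
  exact hC x (Ioo_subset_Icc_self hx)

theorem intervalIntegrable (hu : IntervalSobolev ℓ p u u') {x : ℝ} (hx : x ∈ Icc 0 ℓ) :
    IntervalIntegrable u' volume 0 x := by
  have hint : IntegrableOn u' (Icc 0 ℓ) := (integrableOn_Icc_iff_integrableOn_Ioo).2 hu.1
  refine (hint.mono_set ?_).intervalIntegrable
  rw [uIcc_of_le hx.1]
  exact Icc_subset_Icc_right hx.2

theorem memLp (hp : 0 < p) (hu : IntervalSobolev ℓ p u u') :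
    MemLp u' (ENNReal.ofReal p) (volume.restrict (Ioo 0 ℓ)) :=
  (integrable_abs_rpow_iff_memLp hp hu.1.aestronglyMeasurable).1 hu.2.1

theorem sub {v v' : ℝ → ℝ} (hp : 0 < p) (hu : IntervalSobolev ℓ p u u')
    (hv : IntervalSobolev ℓ p v v') :
    IntervalSobolev ℓ p (fun x => u x - v x) (fun x => u' x - v' x) := by
  refine ⟨hu.1.sub hv.1, ?_, fun x hx => ?_⟩
  · exact (integrable_abs_rpow_iff_memLp hp (hu.1.sub hv.1).aestronglyMeasurable).2
      ((hu.memLp hp).sub (hv.memLp hp))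
  · beta_reduce
    rw [hu.2.2 x hx, hv.2.2 x hx,
      intervalIntegral.integral_sub (hu.intervalIntegrable hx) (hv.intervalIntegrable hx)]
    ring

theorem comp {q : ℝ → ℝ} {K : ℝ≥0} (hp : 0 < p) (hu : IntervalSobolev ℓ p u u')
    (hq : Differentiable ℝ q) (hqK : LipschitzWith K q) :
    IntervalSobolev ℓ p (fun x => q (u x)) (fun x => deriv q (u x) * u' x) := by
  have hbound : ∀ y, ‖deriv q y‖ ≤ K := fun _ => norm_deriv_le_of_lipschitz hqK
  have hint : IntegrableOn (fun x => deriv q (u x) * u' x) (Ioo 0 ℓ) :=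
    hu.1.bdd_mul ((measurable_deriv q).comp_aemeasurable
      hu.aestronglyMeasurable.aemeasurable).aestronglyMeasurable (ae_of_all _ fun _ => hbound _)
  refine ⟨hint, ?_, fun x hx => ?_⟩
  · refine (integrable_abs_rpow_iff_memLp hp hint.aestronglyMeasurable).2
      ((hu.memLp hp).of_le_mul (c := K) hint.aestronglyMeasurable (ae_of_all _ fun y => ?_))
    rw [norm_mul]
    exact mul_le_mul_of_nonneg_right (hbound _) (norm_nonneg _)
  · have hchain := integral_deriv_comp_primitive_mul hq hqK (hu.intervalIntegrable hx) (u 0)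
    rw [← hu.2.2 x hx] at hchain
    have hcongr : ∫ t in 0..x, deriv q (u t) * u' t
        = ∫ t in 0..x, deriv q (u 0 + ∫ s in 0..t, u' s) * u' t := by
      refine intervalIntegral.integral_congr fun t ht => ?_
      rw [uIcc_of_le hx.1] at ht
      rw [← hu.2.2 t ⟨ht.1, ht.2.trans hx.2⟩]
    beta_reduce
    rw [hcongr, hchain, add_sub_cancel]

end IntervalSobolev

namespace GraphSobolev

variable {G : MetricGraph} {p : G.E → ℝ} {u u' : G.E → ℝ → ℝ} {uV : G.V → ℝ}

theorem sub {v v' : G.E → ℝ → ℝ} {vV : G.V → ℝ} (hp : ∀ e, 0 < p e)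
    (hu : GraphSobolev G p u u' uV) (hv : GraphSobolev G p v v' vV) :
    GraphSobolev G p (fun e x => u e x - v e x) (fun e x => u' e x - v' e x)
      (fun z => uV z - vV z) :=
  ⟨fun e => (hu.1 e).sub (hp e) (hv.1 e), fun e => by beta_reduce; rw [hu.2.1 e, hv.2.1 e],
    fun e => by beta_reduce; rw [hu.2.2 e, hv.2.2 e]⟩

theorem comp {q : ℝ → ℝ} {K : ℝ≥0} (hp : ∀ e, 0 < p e) (hu : GraphSobolev G p u u' uV)
    (hq : Differentiable ℝ q) (hqK : LipschitzWith K q) :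
    GraphSobolev G p (fun e x => q (u e x)) (fun e x => deriv q (u e x) * u' e x)
      (fun z => q (uV z)) :=
  ⟨fun e => (hu.1 e).comp (hp e) hq hqK, fun e => by beta_reduce; rw [hu.2.1 e],
    fun e => by beta_reduce; rw [hu.2.2 e]⟩

end GraphSobolev

section Rho

variable {p : ℝ}

theorem rho_of_nonneg (hp : 1 < p) {r : ℝ} (hr : 0 ≤ r) : rho p r = r ^ (p - 1) := by
  rw [rho, abs_of_nonneg hr, show p - 1 = (p - 2) + 1 by ring,
    Real.rpow_add' hr (by linarith), Real.rpow_one]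

theorem rho_neg (p r : ℝ) : rho p (-r) = -rho p r := by
  simp [rho, abs_neg]

theorem monotone_rho (hp : 1 < p) : Monotone (rho p) := by
  have hmono : ∀ a b : ℝ, 0 ≤ a → a ≤ b → rho p a ≤ rho p b := fun a b ha hab => by
    rw [rho_of_nonneg hp ha, rho_of_nonneg hp (ha.trans hab)]
    exact Real.rpow_le_rpow ha hab (by linarith)
  intro a b hab
  rcases le_total 0 a with ha | ha
  · exact hmono a b ha hab
  rcases le_total 0 b with hb | hb
  · have h₀ : rho p 0 = 0 := by simp [rho]
    linarith [hmono 0 (-a) le_rfl (by linarith), hmono 0 b le_rfl hb, rho_neg p a]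
  · simpa [rho_neg] using hmono (-b) (-a) (by linarith) (by linarith)

theorem rho_sub_rho_mul_sub_nonneg (hp : 1 < p) (a b : ℝ) :
    0 ≤ (rho p a - rho p b) * (a - b) :=
  ((monotone_rho hp).monovary monotone_id).sub_mul_sub_nonneg b a

theorem abs_rho (hp : 1 < p) (r : ℝ) : |rho p r| = |r| ^ (p - 1) := by
  rw [← rho_of_nonneg hp (abs_nonneg r), rho, rho, abs_mul, abs_abs,
    abs_of_nonneg (Real.rpow_nonneg (abs_nonneg r) _)]

theorem abs_rho_mul_le (hp : 1 < p) (a b : ℝ) : |rho p a * b| ≤ |a| ^ p + |b| ^ p := by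
  have hpow : ∀ x : ℝ, 0 ≤ x → x ^ (p - 1) * x = x ^ p := fun x hx => by
    conv_rhs => rw [show p = (p - 1) + 1 by ring, Real.rpow_add' hx (by linarith), Real.rpow_one]
  rw [abs_mul, abs_rho hp]
  have ha := Real.rpow_nonneg (abs_nonneg a) p
  have hb := Real.rpow_nonneg (abs_nonneg b) p
  rcases le_total |b| |a| with h | h
  · have := mul_le_mul_of_nonneg_left h (Real.rpow_nonneg (abs_nonneg a) (p - 1))
    linarith [hpow _ (abs_nonneg a)]
  · have := mul_le_mul_of_nonneg_right
      (Real.rpow_le_rpow (abs_nonneg a) h (by linarith : 0 ≤ p - 1)) (abs_nonneg b)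
    linarith [hpow _ (abs_nonneg b)]

theorem measurable_rho (p : ℝ) : Measurable (rho p) :=
  (measurable_abs.pow_const _).mul measurable_id

theorem IntervalSobolev.integrableOn_rho_mul {ℓ : ℝ} {u u' φ φ' : ℝ → ℝ} (hp : 1 < p)
    (hu : IntervalSobolev ℓ p u u') (hφ : IntervalSobolev ℓ p φ φ') :
    IntegrableOn (fun x => rho p (u' x) * φ' x) (Ioo 0 ℓ) :=
  (hu.2.1.add hφ.2.1).mono'
    (((measurable_rho p).comp_aemeasurable hu.1.aemeasurable).mul
      hφ.1.aemeasurable).aestronglyMeasurable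
    (ae_of_all _ fun _ => abs_rho_mul_le hp _ _)

end Rho

noncomputable def heaviside : ℝ → ℝ := (Ioi 0).indicator 1

theorem heaviside_of_pos {t : ℝ} (ht : 0 < t) : heaviside t = 1 :=
  indicator_of_mem ht _

theorem heaviside_of_nonpos {t : ℝ} (ht : t ≤ 0) : heaviside t = 0 :=
  indicator_of_notMem (not_lt.2 ht) _

theorem measurable_heaviside : Measurable heaviside :=
  measurable_const.indicator measurableSet_Ioi

noncomputable def heavisideApprox (n : ℕ) (t : ℝ) : ℝ := Real.smoothTransition ((n + 1) * t)

theorem Real.smoothTransition.exists_lipschitzWith :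
    ∃ K, LipschitzWith K Real.smoothTransition := by
  obtain ⟨K, hK⟩ := (Real.smoothTransition.contDiff (n := 1)).contDiffOn.exists_lipschitzOnWith
    one_ne_zero (convex_Icc (0 : ℝ) 1) isCompact_Icc
  have hproj : LipschitzWith 1 (fun x : ℝ => (projIcc (0 : ℝ) 1 zero_le_one x : ℝ)) := by
    simpa [Function.comp_def] using
      (LipschitzWith.subtype_val (Icc (0 : ℝ) 1)).comp (LipschitzWith.projIcc zero_le_one)
  refine ⟨K * 1, lipschitzOnWith_univ.1 ?_⟩
  convert hK.comp (hproj.lipschitzOnWith (s := univ)) fun _ _ => Subtype.mem _ using 1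
  funext x
  simp

namespace heavisideApprox

theorem differentiable (n : ℕ) : Differentiable ℝ (heavisideApprox n) :=
  (Real.smoothTransition.contDiff (n := 1)).differentiable one_ne_zero |>.comp
    ((differentiable_const _).mul differentiable_id)

theorem exists_lipschitzWith (n : ℕ) : ∃ K, LipschitzWith K (heavisideApprox n) := by
  obtain ⟨K, hK⟩ := Real.smoothTransition.exists_lipschitzWith
  exact ⟨_, hK.comp (lipschitzWith_smul ((n : ℝ) + 1))⟩

theorem monotone (n : ℕ) : Monotone (heavisideApprox n) :=
  Real.smoothTransition.monotone.comp (monotone_id.const_mul (by positivity))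

theorem mem_Icc (n : ℕ) (t : ℝ) : heavisideApprox n t ∈ Icc 0 1 :=
  ⟨Real.smoothTransition.nonneg _, Real.smoothTransition.le_one _⟩

theorem tendsto (t : ℝ) :
    Tendsto (fun n => heavisideApprox n t) atTop (𝓝 (heaviside t)) := by
  rcases lt_or_ge 0 t with ht | ht
  · have hlin : Tendsto (fun n : ℕ => ((n : ℝ) + 1) * t) atTop atTop :=
      (tendsto_natCast_atTop_atTop.atTop_add tendsto_const_nhds).atTop_mul_const ht
    rw [heaviside_of_pos ht]
    exact tendsto_const_nhds.congr' ((hlin.eventually_ge_atTop 1).mono fun n hn =>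
      (Real.smoothTransition.one_of_one_le hn).symm)
  · rw [heaviside_of_nonpos ht]
    exact tendsto_const_nhds.congr fun _ => (Real.smoothTransition.zero_of_nonpos
      (mul_nonpos_of_nonneg_of_nonpos (by positivity) ht)).symm

end heavisideApprox

theorem tendsto_integral_mul_heavisideApprox {α : Type*} [MeasurableSpace α] {μ : Measure α}
    {f g : α → ℝ} (hf : Integrable f μ) (hg : AEStronglyMeasurable g μ) :
    Tendsto (fun n => ∫ x, f x * heavisideApprox n (g x) ∂μ) atTop
      (𝓝 (∫ x, f x * heaviside (g x) ∂μ)) := by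
  refine tendsto_integral_of_dominated_convergence (fun x => ‖f x‖)
    (fun n => hf.aestronglyMeasurable.mul
      ((heavisideApprox.differentiable n).continuous.comp_aestronglyMeasurable hg))
    hf.norm (fun n => ae_of_all _ fun x => ?_)
    (ae_of_all _ fun x => (heavisideApprox.tendsto (g x)).const_mul (f x))
  obtain ⟨h₀, h₁⟩ := heavisideApprox.mem_Icc n (g x)
  rw [norm_mul, Real.norm_of_nonneg h₀]
  exact mul_le_of_le_one_right (norm_nonneg _) h₁

theorem integral_posPart_sub_add_mul_heaviside_le {α : Type*} [MeasurableSpace α]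
    {μ : Measure α} {γ : ℝ → ℝ} (hγ : Monotone γ) {u ub v vh w wh : α → ℝ}
    (hv : Integrable v μ) (hvh : Integrable vh μ) (hw : Integrable w μ) (hwh : Integrable wh μ)
    (hu : AEStronglyMeasurable u μ) (hub : AEStronglyMeasurable ub μ)
    (hvu : ∀ᵐ x ∂μ, v x = γ (u x)) (hvhub : ∀ᵐ x ∂μ, vh x = γ (ub x)) (lam : ℝ) :
    ∫ x, max (v x - vh x) 0 ∂μ + lam * ∫ x, w x * heaviside (u x - ub x) ∂μ
      ≤ ∫ x, max (v x - vh x + lam * (w x - wh x)) 0 ∂μ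
        + lam * ∫ x, wh x * heaviside (u x - ub x) ∂μ := by
  have hH : AEStronglyMeasurable (fun x => heaviside (u x - ub x)) μ :=
    (measurable_heaviside.comp_aemeasurable (hu.sub hub).aemeasurable).aestronglyMeasurable
  have hint : ∀ f : α → ℝ, Integrable f μ →
      Integrable (fun x => lam * (f x * heaviside (u x - ub x))) μ := fun f hf =>
    (hf.mul_bdd (c := 1) hH (ae_of_all _ fun x => by
      rcases le_or_gt (u x - ub x) 0 with h | h
      · simp [heaviside_of_nonpos h]
      · simp [heaviside_of_pos h])).const_mul lam
  have hpos : Integrable (fun x => max (v x - vh x) 0) μ := (hv.sub hvh).pos_part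
  have hpos' : Integrable (fun x => max (v x - vh x + lam * (w x - wh x)) 0) μ :=
    ((hv.sub hvh).add ((hw.sub hwh).const_mul lam)).pos_part
  rw [← integral_const_mul, ← integral_const_mul, ← integral_add hpos (hint w hw),
    ← integral_add hpos' (hint wh hwh)]
  refine integral_mono_ae (hpos.add (hint w hw)) (hpos'.add (hint wh hwh)) ?_
  filter_upwards [hvu, hvhub] with x hx hxh
  rcases le_or_gt (u x - ub x) 0 with h | h
  · have : v x ≤ vh x := by rw [hx, hxh]; exact hγ (by linarith)
    simp only [heaviside_of_nonpos h, mul_zero, add_zero, max_eq_right (sub_nonpos.2 this)]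
    exact le_max_right _ _
  · have : vh x ≤ v x := by rw [hx, hxh]; exact hγ (by linarith)
    simp only [heaviside_of_pos h, mul_one, max_eq_left (sub_nonneg.2 this)]
    linarith [le_max_left (v x - vh x + lam * (w x - wh x)) 0]

section Sums

variable (G : MetricGraph)

theorem edgeSum_add (F F' : G.E → ℝ) :
    edgeSum G (fun e => F e + F' e) = edgeSum G F + edgeSum G F' :=
  Finset.sum_add_distrib

theorem edgeSum_const_mul (c : ℝ) (F : G.E → ℝ) :
    edgeSum G (fun e => c * F e) = c * edgeSum G F :=
  (Finset.mul_sum _ _ _).symm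

theorem edgeSum_le_edgeSum {F F' : G.E → ℝ} (h : ∀ e, F e ≤ F' e) :
    edgeSum G F ≤ edgeSum G F' :=
  Finset.sum_le_sum fun e _ => h e

theorem tendsto_edgeSum {F : ℕ → G.E → ℝ} {L : G.E → ℝ}
    (h : ∀ e, Tendsto (fun n => F n e) atTop (𝓝 (L e))) :
    Tendsto (fun n => edgeSum G (F n)) atTop (𝓝 (edgeSum G L)) :=
  tendsto_finsetSum _ fun e _ => h e

theorem vertexSum_add (F F' : G.V → ℝ) :
    vertexSum G (fun z => F z + F' z) = vertexSum G F + vertexSum G F' :=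
  Finset.sum_add_distrib

theorem vertexSum_le_vertexSum {F F' : G.V → ℝ} (h : ∀ z, F z ≤ F' z) :
    vertexSum G F ≤ vertexSum G F' :=
  Finset.sum_le_sum fun z _ => h z

end Sums

namespace SolvesGraphProblem

variable {G : MetricGraph} {p : G.E → ℝ} {γ γh : G.E → ℝ → ℝ} {v vh w wh : G.E → ℝ → ℝ}
  {ω ωh : G.V → ℝ} {u u' ub ub' : G.E → ℝ → ℝ} {uV ubV : G.V → ℝ}

theorem edgeSum_integral_rho_mul_eq
    (h : SolvesGraphProblem G p γ (fun e x => v e x + w e x) ω v u u' uV)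
    (hw : ∀ e, IntegrableOn (w e) (Ioo 0 (G.len e))) {φ φ' : G.E → ℝ → ℝ} {φV : G.V → ℝ}
    (hφ : GraphSobolev G p φ φ' φV) :
    edgeSum G (fun e => ∫ x in Ioo 0 (G.len e), rho (p e) (u' e x) * φ' e x)
      = edgeSum G (fun e => ∫ x in Ioo 0 (G.len e), w e x * φ e x)
        + vertexSum G (fun z => ω z * φV z) := by
  have hsplit : ∀ e, ∫ x in Ioo 0 (G.len e), (v e x + w e x) * φ e x
      = (∫ x in Ioo 0 (G.len e), v e x * φ e x) + ∫ x in Ioo 0 (G.len e), w e x * φ e x :=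
    fun e => by
      simp_rw [add_mul]
      exact integral_add ((hφ.1 e).integrableOn_mul (h.1 e)) ((hφ.1 e).integrableOn_mul (hw e))
  have hweak := h.2.2.2 φ φ' φV hφ
  simp only [hsplit, edgeSum_add] at hweak
  linarith

theorem edgeSum_integral_mul_comp_sub_le (hp : ∀ e, 1 < p e)
    (h₁ : SolvesGraphProblem G p γ (fun e x => v e x + w e x) ω v u u' uV)
    (h₂ : SolvesGraphProblem G p γh (fun e x => vh e x + wh e x) ωh vh ub ub' ubV)
    (hw : ∀ e, IntegrableOn (w e) (Ioo 0 (G.len e)))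
    (hwh : ∀ e, IntegrableOn (wh e) (Ioo 0 (G.len e)))
    {q : ℝ → ℝ} {K : ℝ≥0} (hq : Differentiable ℝ q) (hqK : LipschitzWith K q)
    (hqm : Monotone q) (hq01 : ∀ t, q t ∈ Icc 0 1) :
    edgeSum G (fun e => ∫ x in Ioo 0 (G.len e), wh e x * q (u e x - ub e x))
      ≤ edgeSum G (fun e => ∫ x in Ioo 0 (G.len e), w e x * q (u e x - ub e x))
        + vertexSum G (fun z => max (ω z - ωh z) 0) := by
  have hp₀ : ∀ e, 0 < p e := fun e => zero_lt_one.trans (hp e)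
  have hφ := (h₁.2.1.sub hp₀ h₂.2.1).comp hp₀ hq hqK
  have E₁ := h₁.edgeSum_integral_rho_mul_eq hw hφ
  have E₂ := h₂.edgeSum_integral_rho_mul_eq hwh hφ
  have hmono := edgeSum_le_edgeSum G fun e => setIntegral_mono_on
    ((h₂.2.1.1 e).integrableOn_rho_mul (hp e) (hφ.1 e))
    ((h₁.2.1.1 e).integrableOn_rho_mul (hp e) (hφ.1 e)) measurableSet_Ioo fun x _ => by
      have := mul_nonneg (hqm.deriv_nonneg (x := u e x - ub e x))
        (rho_sub_rho_mul_sub_nonneg (hp e) (u' e x) (ub' e x))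
      linarith
  have hvert : vertexSum G (fun z => ω z * q (uV z - ubV z))
      ≤ vertexSum G (fun z => ωh z * q (uV z - ubV z))
        + vertexSum G (fun z => max (ω z - ωh z) 0) := by
    rw [← vertexSum_add]
    refine vertexSum_le_vertexSum G fun z => ?_
    obtain ⟨hq₀, hq₁⟩ := hq01 (uV z - ubV z)
    rcases le_total 0 (ω z - ωh z) with hω | hω
    · nlinarith [le_max_left (ω z - ωh z) 0]
    · nlinarith [le_max_right (ω z - ωh z) 0]
  linarith

theorem edgeSum_integral_mul_heaviside_sub_le (hp : ∀ e, 1 < p e)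
    (h₁ : SolvesGraphProblem G p γ (fun e x => v e x + w e x) ω v u u' uV)
    (h₂ : SolvesGraphProblem G p γh (fun e x => vh e x + wh e x) ωh vh ub ub' ubV)
    (hw : ∀ e, IntegrableOn (w e) (Ioo 0 (G.len e)))
    (hwh : ∀ e, IntegrableOn (wh e) (Ioo 0 (G.len e))) :
    edgeSum G (fun e => ∫ x in Ioo 0 (G.len e), wh e x * heaviside (u e x - ub e x))
      ≤ edgeSum G (fun e => ∫ x in Ioo 0 (G.len e), w e x * heaviside (u e x - ub e x))
        + vertexSum G (fun z => max (ω z - ωh z) 0) := by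
  have hlim : ∀ f : G.E → ℝ → ℝ, (∀ e, IntegrableOn (f e) (Ioo 0 (G.len e))) →
      Tendsto (fun n => edgeSum G fun e =>
          ∫ x in Ioo 0 (G.len e), f e x * heavisideApprox n (u e x - ub e x)) atTop
        (𝓝 (edgeSum G fun e => ∫ x in Ioo 0 (G.len e), f e x * heaviside (u e x - ub e x))) :=
    fun f hf => tendsto_edgeSum G fun e => tendsto_integral_mul_heavisideApprox (hf e)
      ((h₁.2.1.1 e).aestronglyMeasurable.sub (h₂.2.1.1 e).aestronglyMeasurable)
  refine le_of_tendsto_of_tendsto' (hlim wh hwh) ((hlim w hw).add_const _) fun n => ?_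
  obtain ⟨K, hK⟩ := heavisideApprox.exists_lipschitzWith n
  exact h₁.edgeSum_integral_mul_comp_sub_le hp h₂ hw hwh (heavisideApprox.differentiable n) hK
    (heavisideApprox.monotone n) (heavisideApprox.mem_Icc n)

end SolvesGraphProblem

/-- T-accretivity of the doubly nonlinear diffusion operator on G:
if v solves (P_ω^{v+w}) and v̂ solves (P_ω̂^{v̂+ŵ}), then for every λ > 0 the positive
parts satisfy the resolvent-type inequality. -/
theorem graph_operator_T_accretive
    (G : MetricGraph) (p : G.E → ℝ) (hp : ∀ e, 1 < p e)
    (γ : G.E → ℝ → ℝ)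
    (hγ : ∀ e, Continuous (γ e) ∧ StrictMono (γ e) ∧ Function.Surjective (γ e) ∧ γ e 0 = 0)
    (v vh w wh : G.E → ℝ → ℝ) (ω ωh : G.V → ℝ)
    (hw : ∀ e, IntegrableOn (w e) (Ioo 0 (G.len e)) volume)
    (hwh : ∀ e, IntegrableOn (wh e) (Ioo 0 (G.len e)) volume)
    (h₁ : IsGraphWeakSolution G p γ (fun e x => v e x + w e x) ω v)
    (h₂ : IsGraphWeakSolution G p γ (fun e x => vh e x + wh e x) ωh vh) :
    ∀ lam : ℝ, 0 < lam →
      edgeSum G (fun e => ∫ x in Ioo (0:ℝ) (G.len e), max (v e x - vh e x) 0)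
        ≤ edgeSum G (fun e => ∫ x in Ioo (0:ℝ) (G.len e),
            max (v e x - vh e x + lam * (w e x - wh e x)) 0)
          + lam * vertexSum G (fun z => max (ω z - ωh z) 0) := by
  intro lam hlam
  obtain ⟨u, u', uV, h₁⟩ := h₁
  obtain ⟨ub, ub', ubV, h₂⟩ := h₂
  have hkato := h₁.edgeSum_integral_mul_heaviside_sub_le hp h₂ hw hwh
  have hedge := edgeSum_le_edgeSum G fun e =>
    integral_posPart_sub_add_mul_heaviside_le (hγ e).2.1.monotone (h₁.1 e) (h₂.1 e) (hw e)
      (hwh e) (h₁.2.1.1 e).aestronglyMeasurable (h₂.2.1.1 e).aestronglyMeasurable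
      (h₁.2.2.1 e) (h₂.2.2.1 e) lam
  rw [edgeSum_add, edgeSum_add, edgeSum_const_mul, edgeSum_const_mul] at hedge
  linarith [mul_le_mul_of_nonneg_left hkato hlam.le]
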